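/- Consider the scalar linear Volterra-type equation V(t) = F(t) + ∫₀ᵗ V(s⁻) dK(s) on [0, τ], where F is a càdlàg function of bounded variation with F(0) = 0 and K is a right-continuous nondecreasing step function with finitely many jumps, none equal to −1. Then the unique solution is V(t) = ∫₀ᵗ 𝓕(s, t) dF(s), where 𝓕(s, t) = ∏_{u ∈ (s, t]} (1 + ΔK(u)) is the product over jump times of K in (s, t]. -/

import Mathlib

/-!
Expanding the product by `∏ (1 + f u) = 1 + ∑ f u * ∏_{w < u} (1 + f w)` and integrating in `s`
shows that `W(t) = ∫_{(0,t]} 𝓕(s, t) dF(s)` satisfies the Volterra equation, with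
`∫_{(0,u)} 𝓕(s, u⁻) dF(s)` in the role of `W(u⁻)`. Between jumps `V` differs from `F` by a
constant, so `V(u⁻) = F(u⁻) + ∑_{v < u} V(v⁻) ΔK(v)`: the left limits at the jump times obey a
triangular recursion, which therefore determines them, and the equation for `V(t)` yields the
formula.
-/

open MeasureTheory Set Function Filter Topology
open scoped Classical

lemma measurable_prod_filter_lt (T : Finset ℝ) (g : ℝ → ℝ) :
    Measurable fun s => ∏ u ∈ T with s < u, (1 + g u) := by
  simp_rw [Finset.prod_filter]
  exact Finset.measurable_prod _ fun u _ =>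
    Measurable.ite measurableSet_Iio measurable_const measurable_const

lemma abs_prod_filter_lt_le (T : Finset ℝ) (g : ℝ → ℝ) (s : ℝ) :
    |∏ u ∈ T with s < u, (1 + g u)| ≤ ∏ u ∈ T, (1 + |g u|) := by
  rw [Finset.abs_prod]
  calc ∏ u ∈ T with s < u, |1 + g u| ≤ ∏ u ∈ T with s < u, (1 + |g u|) :=
        Finset.prod_le_prod (fun _ _ => abs_nonneg _) fun u _ =>
          (abs_add_le _ _).trans_eq (by rw [abs_one])
    _ ≤ ∏ u ∈ T, (1 + |g u|) :=
        Finset.prod_le_prod_of_subset_of_one_le (Finset.filter_subset _ _)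
          (fun u _ => by positivity) fun u _ _ => le_add_of_nonneg_right (abs_nonneg _)

lemma integrable_prod_filter_lt {μ : Measure ℝ} [IsFiniteMeasure μ] (T : Finset ℝ)
    (g : ℝ → ℝ) : Integrable (fun s => ∏ u ∈ T with s < u, (1 + g u)) μ :=
  .of_bound (measurable_prod_filter_lt T g).aestronglyMeasurable _
    (ae_of_all _ (abs_prod_filter_lt_le T g))

lemma prod_filter_lt_eq_one_add_sum_indicator (T : Finset ℝ) (g : ℝ → ℝ) (s : ℝ) :
    ∏ u ∈ T with s < u, (1 + g u)
      = 1 + ∑ u ∈ T, (Iio u).indicator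
          (fun s => (∏ w ∈ T.filter (· < u) with s < w, (1 + g w)) * g u) s := by
  rw [Finset.prod_one_add_ordered, Finset.sum_filter]
  congr 1
  refine Finset.sum_congr rfl fun u _ => ?_
  simp only [indicator_apply, mem_Iio, Finset.filter_comm, mul_comm]

lemma setIntegral_prod_filter_lt {μ : Measure ℝ} {A : Set ℝ} (hA : μ A ≠ ⊤) (T : Finset ℝ)
    (g : ℝ → ℝ) :
    ∫ s in A, ∏ u ∈ T with s < u, (1 + g u) ∂μ
      = μ.real A + ∑ u ∈ T,
          (∫ s in A ∩ Iio u, ∏ w ∈ T.filter (· < u) with s < w, (1 + g w) ∂μ) * g u := by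
  have : IsFiniteMeasure (μ.restrict A) := isFiniteMeasure_restrict.2 hA
  have hint : ∀ u ∈ T, Integrable ((Iio u).indicator
      (fun s => (∏ w ∈ T.filter (· < u) with s < w, (1 + g w)) * g u)) (μ.restrict A) := fun u _ =>
    ((integrable_prod_filter_lt _ g).mul_const _).indicator measurableSet_Iio
  simp_rw [prod_filter_lt_eq_one_add_sum_indicator T g]
  rw [integral_add (integrable_const 1) (integrable_finsetSum _ hint),
    integral_finsetSum _ hint, integral_const, smul_eq_mul, mul_one,
    measureReal_restrict_apply_univ]
  simp_rw [setIntegral_indicator measurableSet_Iio, integral_mul_const]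

lemma setIntegral_prod_filter_lt_of_antitone {μ : Measure ℝ} {p : ℝ → Prop} [DecidablePred p]
    (hp : Antitone p) (hμ : μ {s | 0 < s ∧ p s} ≠ ⊤) (S : Finset ℝ) (g : ℝ → ℝ) :
    ∫ s in {s | 0 < s ∧ p s}, ∏ u ∈ S with s < u ∧ p u, (1 + g u) ∂μ
      = μ.real {s | 0 < s ∧ p s} + ∑ u ∈ S with 0 < u ∧ p u,
          (∫ s in Ioo 0 u, ∏ w ∈ S with s < w ∧ w < u, (1 + g w) ∂μ) * g u := by
  have hfilter (s : ℝ) : S.filter (fun u => s < u ∧ p u) = (S.filter p).filter (s < ·) := by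
    rw [Finset.filter_filter]; exact Finset.filter_congr fun _ _ => and_comm
  have hIio {u : ℝ} (hu : p u) : {s | 0 < s ∧ p s} ∩ Iio u = Ioo 0 u :=
    ext fun s => ⟨fun h => ⟨h.1.1, h.2⟩, fun h => ⟨⟨h.1, hp h.2.le hu⟩, h.2⟩⟩
  simp_rw [hfilter, setIntegral_prod_filter_lt hμ]
  congr 1
  rw [← Finset.sum_filter_of_ne (p := (0 < ·)) fun u hu hne => ?_]
  · refine Finset.sum_congr rfl fun u hu => ?_
    simp only [Finset.mem_filter] at hu
    rw [hIio hu.1.2]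
    congr 2 with s
    congr 1
    ext w
    simp only [Finset.mem_filter]
    exact ⟨fun h => ⟨h.1.1.1, h.2, h.1.2⟩, fun h => ⟨⟨⟨h.1, hp h.2.2.le hu.1.2⟩, h.2.2⟩, h.2.1⟩⟩
  · simp only [Finset.mem_filter] at hu
    by_contra hu0
    rw [hIio hu.2, Ioo_eq_empty hu0] at hne
    simp at hne

lemma setIntegral_Ioc_prod_one_add (G : StieltjesFunction ℝ) {t : ℝ} (ht : 0 ≤ t)
    (S : Finset ℝ) (g : ℝ → ℝ) :
    ∫ s in Ioc 0 t, ∏ u ∈ S with s < u ∧ u ≤ t, (1 + g u) ∂G.measure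
      = (G t - G 0) + ∑ u ∈ S with 0 < u ∧ u ≤ t,
          (∫ s in Ioo 0 u, ∏ w ∈ S with s < w ∧ w < u, (1 + g w) ∂G.measure) * g u := by
  have hIoc : {s | 0 < s ∧ s ≤ t} = Ioc 0 t := rfl
  have h := setIntegral_prod_filter_lt_of_antitone (μ := G.measure) (p := (· ≤ t))
    (fun _ _ h h' => h.trans h') (by rw [hIoc, G.measure_Ioc]; exact ENNReal.ofReal_ne_top) S g
  rwa [hIoc, measureReal_def, G.measure_Ioc, ENNReal.toReal_ofReal (sub_nonneg.2 (G.mono ht))]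
    at h

lemma setIntegral_Ioo_prod_one_add (G : StieltjesFunction ℝ) {t : ℝ} (ht : 0 < t)
    (S : Finset ℝ) (g : ℝ → ℝ) :
    ∫ s in Ioo 0 t, ∏ u ∈ S with s < u ∧ u < t, (1 + g u) ∂G.measure
      = (leftLim G t - G 0) + ∑ u ∈ S with 0 < u ∧ u < t,
          (∫ s in Ioo 0 u, ∏ w ∈ S with s < w ∧ w < u, (1 + g w) ∂G.measure) * g u := by
  have hIoo : {s | 0 < s ∧ s < t} = Ioo 0 t := rfl
  have h := setIntegral_prod_filter_lt_of_antitone (μ := G.measure) (p := (· < t))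
    (fun _ _ h h' => h.trans_lt h') (by rw [hIoo, G.measure_Ioo]; exact ENNReal.ofReal_ne_top) S g
  rwa [hIoo, measureReal_def, G.measure_Ioo,
    ENNReal.toReal_ofReal (sub_nonneg.2 (G.mono.le_leftLim ht))] at h

lemma eventually_filter_le_eq_filter_lt {α : Type*} [LinearOrder α] [TopologicalSpace α]
    [OrderTopology α] (S : Finset α) (u : α) :
    ∀ᶠ t in 𝓝[<] u, S.filter (· ≤ t) = S.filter (· < u) := by
  have h : ∀ v ∈ S, ∀ᶠ t in 𝓝[<] u, (v ≤ t ↔ v < u) := by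
    intro v _
    by_cases hvu : v < u
    · filter_upwards [Ioo_mem_nhdsLT hvu] with t ht
      exact iff_of_true ht.1.le hvu
    · filter_upwards [self_mem_nhdsWithin] with t (ht : t < u)
      exact iff_of_false (fun h => hvu (h.trans_lt ht)) hvu
  filter_upwards [(eventually_all_finset S).2 h] with t ht
  exact Finset.filter_congr ht

lemma leftLim_eq_add_sum_filter_lt {V F : ℝ → ℝ} {S : Finset ℝ} {a : ℝ → ℝ} {τ u ℓ : ℝ}
    (hF : Tendsto F (𝓝[<] u) (𝓝 ℓ))
    (hV : ∀ t ∈ Icc 0 τ, V t = F t + ∑ v ∈ S with 0 < v ∧ v ≤ t, a v)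
    (hu0 : 0 < u) (huτ : u ≤ τ) :
    leftLim V u = ℓ + ∑ v ∈ S with 0 < v ∧ v < u, a v := by
  rw [← Finset.filter_filter]
  refine leftLim_eq_of_tendsto ((hF.add tendsto_const_nhds).congr' ?_)
  filter_upwards [Ioo_mem_nhdsLT hu0, eventually_filter_le_eq_filter_lt (S.filter (0 < ·)) u]
    with t ht hS
  rw [← hS, Finset.filter_filter, hV t ⟨ht.1.le, ht.2.le.trans huτ⟩]

lemma eq_of_eq_add_sum_filter_lt {α R : Type*} [LinearOrder α] [AddCommMonoid R] [Mul R]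
    {T : Finset α} {x y b c : α → R}
    (hx : ∀ u ∈ T, x u = b u + ∑ v ∈ T with v < u, x v * c v)
    (hy : ∀ u ∈ T, y u = b u + ∑ v ∈ T with v < u, y v * c v) :
    ∀ u ∈ T, x u = y u := by
  induction T using Finset.induction_on_max with
  | empty => simp
  | insert a T ha ih =>
    have hfilter : ∀ u ∈ T, (insert a T).filter (· < u) = T.filter (· < u) := fun u hu => by
      rw [Finset.filter_insert, if_neg (ha u hu).not_gt]
    have hT : ∀ u ∈ T, x u = y u :=
      ih (fun u hu => by rw [hx u (Finset.mem_insert_of_mem hu), hfilter u hu])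
        (fun u hu => by rw [hy u (Finset.mem_insert_of_mem hu), hfilter u hu])
    have hmax : (insert a T).filter (· < a) = T := by
      rw [Finset.filter_insert, if_neg (lt_irrefl a), Finset.filter_true_of_mem ha]
    intro u hu
    rcases Finset.mem_insert.1 hu with rfl | hu
    · rw [hx u hu, hy u hu, hmax, Finset.sum_congr rfl fun v hv => by rw [hT v hv]]
    · exact hT u hu

theorem volterra_product_integral_solution_general
    (τ : ℝ)
    (S : Finset ℝ) (j : ℝ → ℝ)
    (F₁ F₂ : StieltjesFunction ℝ) (hF0 : F₁ 0 - F₂ 0 = 0)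
    (V : ℝ → ℝ)
    (hV : ∀ t ∈ Set.Icc (0:ℝ) τ,
      V t = (F₁ t - F₂ t)
        + ∑ u ∈ S.filter (fun u => 0 < u ∧ u ≤ t), Function.leftLim V u * j u) :
    ∀ t ∈ Set.Icc (0:ℝ) τ,
      V t = (∫ s in Set.Ioc (0:ℝ) t,
              (∏ u ∈ S.filter (fun u => s < u ∧ u ≤ t), (1 + j u)) ∂F₁.measure)
            - ∫ s in Set.Ioc (0:ℝ) t,
              (∏ u ∈ S.filter (fun u => s < u ∧ u ≤ t), (1 + j u)) ∂F₂.measure := by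
  set W : StieltjesFunction ℝ → ℝ → ℝ := fun G u =>
    ∫ s in Ioo 0 u, ∏ w ∈ S with s < w ∧ w < u, (1 + j w) ∂G.measure
  set T := S.filter fun u => 0 < u ∧ u ≤ τ
  have hT : ∀ u ∈ T, T.filter (· < u) = S.filter fun v => 0 < v ∧ v < u := by
    intro u hu
    rw [Finset.filter_filter]
    exact Finset.filter_congr fun v _ =>
      ⟨fun h => ⟨h.1.1, h.2⟩, fun h => ⟨⟨h.1, h.2.le.trans (Finset.mem_filter.1 hu).2.2⟩, h.2⟩⟩
  have hleft : ∀ u ∈ T, leftLim V u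
      = (leftLim F₁ u - leftLim F₂ u) + ∑ v ∈ T with v < u, leftLim V v * j v := by
    intro u hu
    obtain ⟨-, hu0, huτ⟩ := Finset.mem_filter.1 hu
    rw [hT u hu]
    exact leftLim_eq_add_sum_filter_lt
      ((F₁.mono.tendsto_leftLim u).sub (F₂.mono.tendsto_leftLim u)) hV hu0 huτ
  have hW : ∀ u ∈ T, W F₁ u - W F₂ u
      = (leftLim F₁ u - leftLim F₂ u) + ∑ v ∈ T with v < u, (W F₁ v - W F₂ v) * j v := by
    intro u hu
    rw [hT u hu]
    simp only [W, setIntegral_Ioo_prod_one_add _ (Finset.mem_filter.1 hu).2.1, sub_mul,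
      Finset.sum_sub_distrib]
    linarith
  have hVW := eq_of_eq_add_sum_filter_lt hleft hW
  intro t ht
  rw [hV t ht, setIntegral_Ioc_prod_one_add F₁ ht.1, setIntegral_Ioc_prod_one_add F₂ ht.1,
    Finset.sum_congr rfl fun u hu => by
      obtain ⟨huS, hu0, hut⟩ := Finset.mem_filter.1 hu
      rw [hVW u (Finset.mem_filter.2 ⟨huS, hu0, hut.trans ht.2⟩)]]
  simp only [W, sub_mul, Finset.sum_sub_distrib]
  linarith

/-- Explicit product-integral solution of a linear Volterra equation driven by a
pure-jump nondecreasing step function `K` (jumps `j u ≥ 0`, none equal to `−1`,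
at the finitely many times `u ∈ S`) with càdlàg bounded-variation forcing term
`F = F₁ − F₂`, `F(0) = 0`: any solution of
`V(t) = F(t) + ∫₀ᵗ V(s⁻) dK(s)` on `[0, τ]` satisfies
`V(t) = ∫₀ᵗ ∏_{u ∈ (s,t]} (1 + ΔK(u)) dF(s)`. -/
theorem volterra_product_integral_solution
    (τ : ℝ) (hτ : 0 < τ)
    (S : Finset ℝ) (j : ℝ → ℝ)
    (hj0 : ∀ u ∈ S, 0 ≤ j u) (hjne : ∀ u ∈ S, j u ≠ -1)
    (K : ℝ → ℝ) (hK : ∀ t, K t = ∑ u ∈ S, if u ≤ t then j u else 0)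
    (F₁ F₂ : StieltjesFunction ℝ) (hF0 : F₁ 0 - F₂ 0 = 0)
    (V : ℝ → ℝ)
    (hV : ∀ t ∈ Set.Icc (0:ℝ) τ,
      V t = (F₁ t - F₂ t)
        + ∑ u ∈ S.filter (fun u => 0 < u ∧ u ≤ t), Function.leftLim V u * j u) :
    ∀ t ∈ Set.Icc (0:ℝ) τ,
      V t = (∫ s in Set.Ioc (0:ℝ) t,
              (∏ u ∈ S.filter (fun u => s < u ∧ u ≤ t), (1 + j u)) ∂F₁.measure)
            - ∫ s in Set.Ioc (0:ℝ) t,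
              (∏ u ∈ S.filter (fun u => s < u ∧ u ≤ t), (1 + j u)) ∂F₂.measure :=
  volterra_product_integral_solution_general τ S j F₁ F₂ hF0 V hV
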